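/- Let g = [[a,b],[c,d]] be a real 2×2 matrix with det g = 1 and d ≠ 0, acting on the upper half-plane by g·z = (az + b)/(cz + d), and let P_ℍ(z, x') := Im(z)/|z − x'|² denote the Poisson kernel of the upper half-plane (z in the upper half-plane, x' ∈ ℝ). Then P_ℍ(g·i, g·0) = d². Consequently, with X = [[1/2,0],[0,-1/2]] and U₋ = [[0,0],[1,0]] and exp the matrix exponential: d/dt|_{t=0} P_ℍ(g·exp(tX)·i, g·exp(tX)·0) = −d² (the function Φ₋(g) := P_ℍ(g·i, g·0) satisfies XΦ₋ = −Φ₋), and d/dt|_{t=0} P_ℍ(g·exp(tU₋)·i, g·exp(tU₋)·0) = 0 (i.e. U₋Φ₋ = 0). -/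

import Mathlib

/-!
The Poisson kernel transforms under `g = [[a,b],[c,d]] ∈ SL(2,ℝ)` as
`P_ℍ(g·z, g·x) = P_ℍ(z, x) |cx + d|²`, so `Φ₋(g) = P_ℍ(i, 0) d² = d²`. The one-parameter
groups `exp(tX)` and `exp(tU₋)` are lower triangular with lower-right entries `e^{-t/2}` and `1`,
and for lower triangular `h` the lower-right entry of `g h` is `d h₁₁`; hence
`Φ₋(g exp(tX)) = e^{-t} Φ₋(g)` and `Φ₋(g exp(tU₋)) = Φ₋(g)`.
-/

open Complex

/-- The Möbius action of a real 2×2 matrix on ℂ: `g·z = (az + b)/(cz + d)`. -/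
noncomputable def moebAct (g : Matrix (Fin 2) (Fin 2) ℝ) (z : ℂ) : ℂ :=
  ((g 0 0 : ℂ) * z + (g 0 1 : ℂ)) / ((g 1 0 : ℂ) * z + (g 1 1 : ℂ))

/-- The Poisson kernel of the upper half-plane: `P_ℍ(z, w) = Im z / |z − w|²`. -/
noncomputable def PH (z w : ℂ) : ℝ := z.im / ‖z - w‖ ^ 2

/-- `X = [[1/2,0],[0,-1/2]]`. -/
noncomputable def Xr : Matrix (Fin 2) (Fin 2) ℝ := !![1/2, 0; 0, -(1/2)]

/-- `U₋ = [[0,0],[1,0]]`. -/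
noncomputable def Umr : Matrix (Fin 2) (Fin 2) ℝ := !![0, 0; 1, 0]

section MoebiusAction

variable {g : Matrix (Fin 2) (Fin 2) ℝ}

lemma im_moebAct (hdet : g.det = 1) (z : ℂ) :
    (moebAct g z).im = z.im / normSq ((g 1 0 : ℂ) * z + g 1 1) := by
  rw [Matrix.det_fin_two] at hdet
  simp only [moebAct, div_im, mul_re, mul_im, add_re, add_im, ofReal_re, ofReal_im]
  rw [div_sub_div_same]
  congr 1
  linear_combination z.im * hdet

lemma moebAct_sub_moebAct (hdet : g.det = 1) {z w : ℂ}
    (hz : (g 1 0 : ℂ) * z + g 1 1 ≠ 0) (hw : (g 1 0 : ℂ) * w + g 1 1 ≠ 0) :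
    moebAct g z - moebAct g w
      = (z - w) / (((g 1 0 : ℂ) * z + g 1 1) * ((g 1 0 : ℂ) * w + g 1 1)) := by
  rw [Matrix.det_fin_two] at hdet
  have hdetC : (g 0 0 : ℂ) * g 1 1 - g 0 1 * g 1 0 = 1 := by exact_mod_cast hdet
  rw [moebAct, moebAct, div_sub_div _ _ hz hw]
  congr 1
  linear_combination (z - w) * hdetC

lemma PH_moebAct (hdet : g.det = 1) {z w : ℂ}
    (hz : (g 1 0 : ℂ) * z + g 1 1 ≠ 0) (hw : (g 1 0 : ℂ) * w + g 1 1 ≠ 0) :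
    PH (moebAct g z) (moebAct g w) = PH z w * normSq ((g 1 0 : ℂ) * w + g 1 1) := by
  have hz' : normSq ((g 1 0 : ℂ) * z + g 1 1) ≠ 0 := normSq_eq_zero.not.mpr hz
  have hw' : normSq ((g 1 0 : ℂ) * w + g 1 1) ≠ 0 := normSq_eq_zero.not.mpr hw
  rw [PH, PH, im_moebAct hdet, moebAct_sub_moebAct hdet hz hw, Complex.sq_norm, Complex.sq_norm,
    normSq_div, normSq_mul]
  rcases eq_or_ne (normSq (z - w)) 0 with hzw | hzw
  · simp [hzw]
  · field_simp

end MoebiusAction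

noncomputable def PhiMinus (g : Matrix (Fin 2) (Fin 2) ℝ) : ℝ :=
  PH (moebAct g I) (moebAct g 0)

lemma PhiMinus_eq_sq {g : Matrix (Fin 2) (Fin 2) ℝ} (hdet : g.det = 1) (hd : g 1 1 ≠ 0) :
    PhiMinus g = g 1 1 ^ 2 := by
  have hI : (g 1 0 : ℂ) * I + g 1 1 ≠ 0 := fun h ↦ hd (by simpa using congrArg re h)
  have h0 : (g 1 0 : ℂ) * 0 + g 1 1 ≠ 0 := by simpa using hd
  rw [PhiMinus, PH_moebAct hdet hI h0]
  simp [PH, sq]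

/-- `Φ₋` is right-equivariant under the lower triangular subgroup. -/
lemma PhiMinus_mul_of_apply_zero_one_eq_zero {g h : Matrix (Fin 2) (Fin 2) ℝ}
    (hg : g.det = 1) (hh : h.det = 1) (h01 : h 0 1 = 0) (hg11 : g 1 1 ≠ 0) (hh11 : h 1 1 ≠ 0) :
    PhiMinus (g * h) = h 1 1 ^ 2 * PhiMinus g := by
  have hgh11 : (g * h) 1 1 = g 1 1 * h 1 1 := by
    simp [Matrix.mul_apply, Fin.sum_univ_two, h01]
  rw [PhiMinus_eq_sq hg hg11, PhiMinus_eq_sq (by rw [Matrix.det_mul, hg, hh, one_mul])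
    (by rw [hgh11]; exact mul_ne_zero hg11 hh11), hgh11]
  ring

lemma exp_eq_one_add_of_sq_eq_zero {𝔸 : Type*} [Ring 𝔸] [Algebra ℚ 𝔸] [TopologicalSpace 𝔸]
    [IsTopologicalRing 𝔸] [T2Space 𝔸] {a : 𝔸} (ha : a ^ 2 = 0) :
    NormedSpace.exp a = 1 + a := by
  have hpow : ∀ n ∉ Finset.range 2, (n.factorial⁻¹ : ℚ) • a ^ n = 0 := fun n hn ↦ by
    rw [pow_eq_zero_of_le (not_lt.mp (Finset.mem_range.not.mp hn)) ha, smul_zero]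
  rw [NormedSpace.exp_eq_tsum_rat]
  beta_reduce
  rw [tsum_eq_sum hpow]
  simp [Finset.sum_range_succ]

lemma exp_smul_Xr (t : ℝ) :
    NormedSpace.exp (t • Xr) = !![Real.exp (t / 2), 0; 0, Real.exp (-(t / 2))] := by
  have hdiag : t • Xr = Matrix.diagonal ![t / 2, -(t / 2)] := by
    ext i j
    fin_cases i <;> fin_cases j <;> simp [Xr] <;> ring
  rw [hdiag, Matrix.exp_diagonal]
  ext i j
  fin_cases i <;> fin_cases j <;> simp [← Real.exp_eq_exp_ℝ]

lemma exp_smul_Umr (t : ℝ) : NormedSpace.exp (t • Umr) = !![1, 0; t, 1] := by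
  have hsq : (t • Umr) ^ 2 = 0 := by
    ext i j
    fin_cases i <;> fin_cases j <;> simp [Umr, sq, Matrix.mul_apply, Fin.sum_univ_two]
  rw [exp_eq_one_add_of_sq_eq_zero hsq]
  ext i j
  fin_cases i <;> fin_cases j <;> simp [Umr]

section Flows

variable {g : Matrix (Fin 2) (Fin 2) ℝ}

lemma PhiMinus_mul_exp_smul_Xr (hdet : g.det = 1) (hd : g 1 1 ≠ 0) (t : ℝ) :
    PhiMinus (g * NormedSpace.exp (t • Xr)) = Real.exp (-t) * PhiMinus g := by
  have hdetX : (NormedSpace.exp (t • Xr)).det = 1 := by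
    rw [exp_smul_Xr, Matrix.det_fin_two_of, mul_zero, sub_zero, ← Real.exp_add, add_neg_cancel,
      Real.exp_zero]
  have h11 : (NormedSpace.exp (t • Xr)) 1 1 = Real.exp (-(t / 2)) := by simp [exp_smul_Xr]
  rw [PhiMinus_mul_of_apply_zero_one_eq_zero hdet hdetX (by simp [exp_smul_Xr]) hd
    (h11 ▸ Real.exp_ne_zero _), h11, ← Real.exp_nat_mul]
  ring_nf

lemma PhiMinus_mul_exp_smul_Umr (hdet : g.det = 1) (hd : g 1 1 ≠ 0) (t : ℝ) :
    PhiMinus (g * NormedSpace.exp (t • Umr)) = PhiMinus g := by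
  have hdetU : (NormedSpace.exp (t • Umr)).det = 1 := by simp [exp_smul_Umr, Matrix.det_fin_two_of]
  rw [PhiMinus_mul_of_apply_zero_one_eq_zero hdet hdetU (by simp [exp_smul_Umr]) hd
    (by simp [exp_smul_Umr])]
  simp [exp_smul_Umr]

end Flows

theorem PhiMinus_flow_derivatives (g : Matrix (Fin 2) (Fin 2) ℝ)
    (hdet : g.det = 1) (hd : g 1 1 ≠ 0) :
    PH (moebAct g Complex.I) (moebAct g 0) = (g 1 1) ^ 2 ∧
    deriv (fun t : ℝ =>
        PH (moebAct (g * NormedSpace.exp (t • Xr)) Complex.I)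
           (moebAct (g * NormedSpace.exp (t • Xr)) 0)) 0 = -(g 1 1) ^ 2 ∧
    deriv (fun t : ℝ =>
        PH (moebAct (g * NormedSpace.exp (t • Umr)) Complex.I)
           (moebAct (g * NormedSpace.exp (t • Umr)) 0)) 0 = 0 := by
  have hflowX : (fun t : ℝ ↦ PhiMinus (g * NormedSpace.exp (t • Xr)))
      = fun t ↦ Real.exp (-t) * g 1 1 ^ 2 := by
    funext t
    rw [PhiMinus_mul_exp_smul_Xr hdet hd, PhiMinus_eq_sq hdet hd]
  have hflowU : (fun t : ℝ ↦ PhiMinus (g * NormedSpace.exp (t • Umr))) = fun _ ↦ g 1 1 ^ 2 := by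
    funext t
    rw [PhiMinus_mul_exp_smul_Umr hdet hd, PhiMinus_eq_sq hdet hd]
  refine ⟨PhiMinus_eq_sq hdet hd, ?_, ?_⟩
  · change deriv (fun t : ℝ ↦ PhiMinus (g * NormedSpace.exp (t • Xr))) 0 = _
    rw [hflowX, ((hasDerivAt_neg' 0).exp.mul_const _).deriv]
    simp
  · change deriv (fun t : ℝ ↦ PhiMinus (g * NormedSpace.exp (t • Umr))) 0 = _
    rw [hflowU, deriv_const]
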